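/- arXiv:1910.08393 — 3 statements merged into one kernel-verified Lean document; each statement's English description precedes it below -/
import Mathlib

section
/- Each Lagrange interpolation polynomial of type A, f_r(a₁,a₂;t;z), is a symmetric polynomial in z = (z₁,…,z_n): for every permutation σ ∈ S_n, f_r(a₁,a₂;t; z_{σ(1)},…,z_{σ(n)}) = f_r(a₁,a₂;t; z₁,…,z_n). -/
/-!
Write `f_r = ∑_I ∏_m w_I(m, z_m)`, where the weight of a position `m` depends only on whether
`m ∈ I` and on how many elements of `I` and of its complement lie below `m`. It suffices to
prove invariance under adjacent transpositions `s = (i i+1)`, which generate the symmetric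
group. Pair each `I` with `s I`. If `i, i+1` are both in `I` or both outside it, then `s I = I`
and the weights at `i` and `i+1` have the same numerator shape, so their product is symmetric
in `z_i, z_{i+1}`. Otherwise the two summands for `I` and `s I` agree outside `{i, i+1}`, and
the sum of their two-point parts is symmetric by a rational-function identity whose
denominators are nonzero by genericity.
-/

open scoped BigOperators

/-- The k-th element (0-indexed) of a finite set of naturals, listed increasingly. -/
def sortedEl (I : Finset ℕ) (k : ℕ) : ℕ := (I.sort (· ≤ ·)).getD k 0

/-- The Lagrange interpolation polynomial of type A:
f_r(a₁,a₂;t;z) = ∑_{I⊆{1,…,n},|I|=r} ∏_{k=1}^{r}(z_{i_k}−a₂t^{i_k−k})/(a₁t^{k−1}−a₂t^{i_k−k})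
  ∏_{l=1}^{n−r}(z_{j_l}−a₁t^{j_l−l})/(a₂t^{l−1}−a₁t^{j_l−l}),
where I = {i₁<⋯<i_r} and {1,…,n}∖I = {j₁<⋯<j_{n−r}}; z is indexed by 1,…,n. -/
noncomputable def lagrangeF (a₁ a₂ t : ℂ) (n r : ℕ) (z : ℕ → ℂ) : ℂ :=
  ∑ I ∈ Finset.powersetCard r (Finset.Icc 1 n),
    (∏ k ∈ Finset.range r,
        (z (sortedEl I k) - a₂ * t ^ (sortedEl I k - (k + 1))) /
          (a₁ * t ^ k - a₂ * t ^ (sortedEl I k - (k + 1)))) *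
      ∏ l ∈ Finset.range (n - r),
        (z (sortedEl ((Finset.Icc 1 n) \ I) l) -
            a₁ * t ^ (sortedEl ((Finset.Icc 1 n) \ I) l - (l + 1))) /
          (a₂ * t ^ l - a₁ * t ^ (sortedEl ((Finset.Icc 1 n) \ I) l - (l + 1)))

open Finset Equiv

lemma Finset.sum_eq_sum_of_involution {ι M : Type*} [AddCommGroup M] {s : Finset ι}
    {f g : ι → M} (e : ι → ι) (he : ∀ a ∈ s, e a ∈ s) (hee : ∀ a ∈ s, e (e a) = a)
    (hfix : ∀ a ∈ s, e a = a → f a = g a)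
    (hpair : ∀ a ∈ s, e a ≠ a → f a + f (e a) = g a + g (e a)) :
    ∑ a ∈ s, f a = ∑ a ∈ s, g a := by
  rw [← sub_eq_zero, ← sum_sub_distrib]
  refine sum_involution (fun a _ => e a) (fun a ha => ?_) (fun a ha hne heq => hne ?_) he hee
  · by_cases h : e a = a
    · rw [h, hfix a ha h, sub_self, add_zero]
    · rw [sub_add_sub_comm, hpair a ha h, sub_self]
  · rw [hfix a ha heq, sub_self]

section MapSwap

variable {α : Type*} [DecidableEq α] {a b : α}

lemma mem_map_swap {I : Finset α} {x : α} :
    x ∈ I.map (swap a b).toEmbedding ↔ swap a b x ∈ I := by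
  rw [mem_map_equiv, symm_swap]

lemma map_swap_map_swap (I : Finset α) :
    (I.map (swap a b).toEmbedding).map (swap a b).toEmbedding = I := by
  ext x
  rw [mem_map_swap, mem_map_swap, swap_apply_self]

lemma map_swap_eq_self {T : Finset α} (h : a ∈ T ↔ b ∈ T) :
    T.map (swap a b).toEmbedding = T := by
  ext x
  rw [mem_map_swap, swap_apply_def]
  split_ifs with ha hb
  · subst ha; exact h.symm
  · subst hb; exact h
  · rfl

lemma map_swap_eq_self_iff {I : Finset α} :
    I.map (swap a b).toEmbedding = I ↔ (a ∈ I ↔ b ∈ I) := by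
  refine ⟨fun h => ?_, map_swap_eq_self⟩
  conv_rhs => rw [← h, mem_map_swap, swap_apply_right]

lemma card_inter_map_swap {T : Finset α} (h : a ∈ T ↔ b ∈ T) (I : Finset α) :
    #(T ∩ I.map (swap a b).toEmbedding) = #(T ∩ I) := by
  conv_lhs => rw [← map_swap_eq_self h, ← map_inter, card_map]

lemma card_sdiff_map_swap {T : Finset α} (h : a ∈ T ↔ b ∈ T) (I : Finset α) :
    #(T \ I.map (swap a b).toEmbedding) = #(T \ I) := by
  conv_lhs => rw [← map_swap_eq_self h, ← Finset.map_sdiff, card_map]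

end MapSwap

def invariantPerms {α β γ : Type*} (F : (α → β) → γ) : Subgroup (Perm α) where
  carrier := {σ | ∀ z, F (z ∘ σ) = F z}
  mul_mem' {σ τ} hσ hτ z := (hτ (z ∘ σ)).trans (hσ z)
  one_mem' _ := rfl
  inv_mem' {σ} hσ z := by
    simpa [Function.comp_assoc] using (hσ (z ∘ ⇑σ⁻¹)).symm

lemma swap_mem_of_forall_swap_succ_mem (H : Subgroup (Perm ℕ)) {a b : ℕ}
    (h : ∀ i, a ≤ i → i < b → swap i (i + 1) ∈ H) {x y : ℕ} (hx : x ∈ Icc a b)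
    (hy : y ∈ Icc a b) : swap x y ∈ H := by
  rw [mem_Icc] at hx hy
  have hlt : ∀ x y, a ≤ x → x < y → y ≤ b → swap x y ∈ H := by
    intro x y hax hxy hyb
    induction y, hxy using Nat.le_induction with
    | base => exact h x hax hyb
    | succ y hxy ih =>
      rw [swap_comm, ← swap_mul_swap_mul_swap (y := y) (by omega) (by omega)]
      exact H.mul_mem (H.mul_mem (h y (by omega) (by omega)) (ih (by omega)))
        (h y (by omega) (by omega))
  rcases lt_trichotomy x y with hxy | rfl | hxy
  · exact hlt x y hx.1 hxy hy.2
  · rw [swap_self]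
    exact H.one_mem
  · rw [swap_comm]
    exact hlt y x hy.1 hxy hx.2

lemma ofSubtype_mem_of_forall_swap_mem {α : Type*} [DecidableEq α] {p : α → Prop}
    [DecidablePred p] [Finite (Subtype p)] (H : Subgroup (Perm α))
    (h : ∀ x y, p x → p y → swap x y ∈ H) (π : Perm (Subtype p)) : Perm.ofSubtype π ∈ H := by
  induction π using Perm.swap_induction_on with
  | one => rw [map_one]; exact H.one_mem
  | swap_mul π x y _ ih =>
    rw [map_mul, Perm.ofSubtype_swap_eq]
    exact H.mul_mem (h x y x.2 y.2) ih

def numBelow (I : Finset ℕ) (m : ℕ) : ℕ := #(range m ∩ I)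

def numMissingBelow (I : Finset ℕ) (m : ℕ) : ℕ := #(Ico 1 m \ I)

lemma numBelow_succ (I : Finset ℕ) (m : ℕ) :
    numBelow I (m + 1) = numBelow I m + if m ∈ I then 1 else 0 := by
  unfold numBelow
  split_ifs with h
  · rw [range_add_one, insert_inter_of_mem h, card_insert_of_notMem (by simp)]
  · rw [range_add_one, insert_inter_of_notMem h, add_zero]

lemma numMissingBelow_succ (I : Finset ℕ) {m : ℕ} (hm : 1 ≤ m) :
    numMissingBelow I (m + 1) = numMissingBelow I m + if m ∈ I then 0 else 1 := by
  unfold numMissingBelow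
  rw [Nat.Ico_succ_right_eq_insert_Ico hm]
  split_ifs with h
  · rw [insert_sdiff_of_mem _ h, add_zero]
  · rw [insert_sdiff_of_notMem _ h, card_insert_of_notMem (by simp)]

lemma numBelow_add_numMissingBelow {I : Finset ℕ} (hI : 0 ∉ I) {m : ℕ} (hm : 1 ≤ m) :
    numBelow I m + numMissingBelow I m + 1 = m := by
  have hinter : range m ∩ I = Ico 1 m ∩ I := by
    ext x
    simp only [mem_inter, mem_range, mem_Ico]
    have : x ∈ I → 1 ≤ x := fun hx => Nat.one_le_iff_ne_zero.2 (by rintro rfl; exact hI hx)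
    tauto
  unfold numBelow numMissingBelow
  rw [hinter, add_comm (#_), card_sdiff_add_card_inter, Nat.card_Ico]
  omega

lemma numBelow_Icc_sdiff {n : ℕ} (I : Finset ℕ) {m : ℕ} (hm : m ≤ n + 1) :
    numBelow (Icc 1 n \ I) m = numMissingBelow I m := by
  unfold numBelow numMissingBelow
  congr 1
  ext x
  simp only [mem_inter, mem_range, mem_sdiff, mem_Icc, mem_Ico]
  have : x < m → x ≤ n := by omega
  tauto

lemma numBelow_map_swap {i m : ℕ} (hm : m ≠ i + 1) (I : Finset ℕ) :
    numBelow (I.map (swap i (i + 1)).toEmbedding) m = numBelow I m :=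
  card_inter_map_swap (by simp only [mem_range]; omega) I

lemma numMissingBelow_map_swap {i m : ℕ} (hi : 1 ≤ i) (hm : m ≠ i + 1) (I : Finset ℕ) :
    numMissingBelow (I.map (swap i (i + 1)).toEmbedding) m = numMissingBelow I m :=
  card_sdiff_map_swap (by simp only [mem_Ico]; omega) I

lemma sortedEl_eq_orderEmbOfFin (S : Finset ℕ) (k : Fin #S) :
    sortedEl S k = S.orderEmbOfFin rfl k := by
  rw [sortedEl, orderEmbOfFin_apply, List.getD_eq_getElem _ _ (by simp)]
  rfl

lemma numBelow_orderEmbOfFin (S : Finset ℕ) (k : Fin #S) :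
    numBelow S (S.orderEmbOfFin rfl k) = k := by
  have h : range (S.orderEmbOfFin rfl k) ∩ S = (Iio k).map (S.orderEmbOfFin rfl).toEmbedding := by
    ext x
    simp only [mem_inter, mem_range, mem_map, mem_Iio, RelEmbedding.coe_toEmbedding]
    constructor
    · rintro ⟨hx, hxS⟩
      obtain ⟨j, rfl⟩ : x ∈ Set.range (S.orderEmbOfFin rfl) := by simpa using hxS
      exact ⟨j, (S.orderEmbOfFin rfl).lt_iff_lt.1 hx, rfl⟩
    · rintro ⟨j, hj, rfl⟩
      exact ⟨(S.orderEmbOfFin rfl).lt_iff_lt.2 hj, orderEmbOfFin_mem S rfl j⟩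
  rw [numBelow, h, card_map, Fin.card_Iio]

lemma prod_range_card_sortedEl {M : Type*} [CommMonoid M] (S : Finset ℕ) (h : ℕ → ℕ → M) :
    ∏ k ∈ range #S, h k (sortedEl S k) = ∏ m ∈ S, h (numBelow S m) m := by
  rw [prod_range fun k => h k (sortedEl S k)]
  have hS := prod_image (s := univ) (f := fun m => h (numBelow S m) m)
    (S.orderEmbOfFin rfl).injective.injOn
  rw [image_orderEmbOfFin_univ] at hS
  rw [hS]
  refine prod_congr rfl fun k _ => ?_
  rw [sortedEl_eq_orderEmbOfFin, numBelow_orderEmbOfFin]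

section Factor

variable {K : Type*} [Field K]

def lagrangeFactor (a b t : K) (c d : ℕ) (x : K) : K :=
  (x - b * t ^ d) / (a * t ^ c - b * t ^ d)

lemma lagrangeFactor_mul_lagrangeFactor_comm (a b t : K) (c c' d : ℕ) (x y : K) :
    lagrangeFactor a b t c d x * lagrangeFactor a b t c' d y =
      lagrangeFactor a b t c d y * lagrangeFactor a b t c' d x := by
  unfold lagrangeFactor
  ring

lemma lagrangeFactor_exchange {a₁ a₂ t : K} {c d : ℕ} (h : a₁ * t ^ c ≠ a₂ * t ^ d)
    (hc : a₁ * t ^ (c + 1) ≠ a₂ * t ^ d) (hd : a₁ * t ^ c ≠ a₂ * t ^ (d + 1)) (x y : K) :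
    lagrangeFactor a₁ a₂ t c d x * lagrangeFactor a₂ a₁ t d (c + 1) y +
        lagrangeFactor a₂ a₁ t d c x * lagrangeFactor a₁ a₂ t c (d + 1) y =
      lagrangeFactor a₁ a₂ t c d y * lagrangeFactor a₂ a₁ t d (c + 1) x +
        lagrangeFactor a₂ a₁ t d c y * lagrangeFactor a₁ a₂ t c (d + 1) x := by
  have h₁ := sub_ne_zero.2 h
  have h₂ := sub_ne_zero.2 h.symm
  have h₃ := sub_ne_zero.2 hc.symm
  have h₄ := sub_ne_zero.2 hd
  unfold lagrangeFactor
  field_simp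
  ring

end Factor

section Weight

variable {K : Type*} [Field K]

/-- For `m = i_k ∈ I` the two counts are `k - 1` and `i_k - k`, for `m = j_l ∉ I` they are
`j_l - l` and `l - 1`: this is the factor at position `m` of the summand of `lagrangeF`
indexed by `I`. -/
def lagrangeWeight (a₁ a₂ t : K) (I : Finset ℕ) (m : ℕ) : K → K :=
  if m ∈ I then lagrangeFactor a₁ a₂ t (numBelow I m) (numMissingBelow I m)
  else lagrangeFactor a₂ a₁ t (numMissingBelow I m) (numBelow I m)

lemma lagrangeWeight_map_swap_of_ne (a₁ a₂ t : K) {i m : ℕ} (hi : 1 ≤ i) (hm : m ≠ i)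
    (hm' : m ≠ i + 1) (I : Finset ℕ) :
    lagrangeWeight a₁ a₂ t (I.map (swap i (i + 1)).toEmbedding) m = lagrangeWeight a₁ a₂ t I m := by
  unfold lagrangeWeight
  rw [numBelow_map_swap hm', numMissingBelow_map_swap hi hm']
  simp only [mem_map_swap, swap_apply_of_ne_of_ne hm hm']

lemma lagrangeWeight_mul_comm_of_iff (a₁ a₂ t : K) {i : ℕ} (hi : 1 ≤ i) {I : Finset ℕ}
    (h : i ∈ I ↔ i + 1 ∈ I) (x y : K) :
    lagrangeWeight a₁ a₂ t I i x * lagrangeWeight a₁ a₂ t I (i + 1) y =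
      lagrangeWeight a₁ a₂ t I i y * lagrangeWeight a₁ a₂ t I (i + 1) x := by
  unfold lagrangeWeight
  by_cases hiI : i ∈ I
  · rw [if_pos hiI, if_pos (h.1 hiI), numMissingBelow_succ I hi, if_pos hiI, add_zero]
    exact lagrangeFactor_mul_lagrangeFactor_comm ..
  · rw [if_neg hiI, if_neg (mt h.2 hiI), numBelow_succ, if_neg hiI, add_zero]
    exact lagrangeFactor_mul_lagrangeFactor_comm ..

lemma lagrangeWeight_exchange {a₁ a₂ t : K} (hgen : ∀ k l : ℕ, a₁ * t ^ k ≠ a₂ * t ^ l)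
    {i : ℕ} (hi : 1 ≤ i) {I : Finset ℕ} (hiI : i ∈ I) (hiI' : i + 1 ∉ I) (x y : K) :
    let J := I.map (swap i (i + 1)).toEmbedding
    lagrangeWeight a₁ a₂ t I i x * lagrangeWeight a₁ a₂ t I (i + 1) y +
        lagrangeWeight a₁ a₂ t J i x * lagrangeWeight a₁ a₂ t J (i + 1) y =
      lagrangeWeight a₁ a₂ t I i y * lagrangeWeight a₁ a₂ t I (i + 1) x +
        lagrangeWeight a₁ a₂ t J i y * lagrangeWeight a₁ a₂ t J (i + 1) x := by
  intro J
  have hiJ : i ∉ J := by rwa [mem_map_swap, swap_apply_left]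
  have hiJ' : i + 1 ∈ J := by rwa [mem_map_swap, swap_apply_right]
  unfold lagrangeWeight
  rw [numBelow_succ, numBelow_succ, numMissingBelow_succ I hi, numMissingBelow_succ J hi,
    numBelow_map_swap (by omega), numMissingBelow_map_swap hi (by omega)]
  simp only [hiI, hiI', hiJ, hiJ', if_true, if_false, add_zero]
  exact lagrangeFactor_exchange (hgen _ _) (hgen _ _) (hgen _ _) x y

end Weight

section Term

variable {K : Type*} [Field K]

def lagrangeTerm (a₁ a₂ t : K) (n : ℕ) (I : Finset ℕ) (z : ℕ → K) : K :=
  ∏ m ∈ Icc 1 n, lagrangeWeight a₁ a₂ t I m (z m)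

variable {a₁ a₂ t : K} {n i : ℕ}

lemma lagrangeTerm_eq_mul (hi : 1 ≤ i) (hin : i < n) (I : Finset ℕ) (z : ℕ → K) :
    lagrangeTerm a₁ a₂ t n I z =
      (∏ m ∈ Icc 1 n \ {i, i + 1}, lagrangeWeight a₁ a₂ t I m (z m)) *
        (lagrangeWeight a₁ a₂ t I i (z i) * lagrangeWeight a₁ a₂ t I (i + 1) (z (i + 1))) := by
  have hsub : {i, i + 1} ⊆ Icc 1 n := by
    simp only [insert_subset_iff, singleton_subset_iff, mem_Icc]
    omega
  rw [lagrangeTerm, ← prod_sdiff hsub, prod_pair (by omega)]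

lemma lagrangeTerm_comp_swap_eq_mul (hi : 1 ≤ i) (hin : i < n) (I : Finset ℕ) (z : ℕ → K) :
    lagrangeTerm a₁ a₂ t n I (z ∘ swap i (i + 1)) =
      (∏ m ∈ Icc 1 n \ {i, i + 1}, lagrangeWeight a₁ a₂ t I m (z m)) *
        (lagrangeWeight a₁ a₂ t I i (z (i + 1)) * lagrangeWeight a₁ a₂ t I (i + 1) (z i)) := by
  rw [lagrangeTerm_eq_mul hi hin, Function.comp_apply, Function.comp_apply, swap_apply_left,
    swap_apply_right]
  congr 1
  refine prod_congr rfl fun m hm => ?_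
  simp only [mem_sdiff, mem_insert, mem_singleton, not_or] at hm
  rw [Function.comp_apply, swap_apply_of_ne_of_ne hm.2.1 hm.2.2]

lemma prod_lagrangeWeight_map_swap (hi : 1 ≤ i) (I : Finset ℕ) (z : ℕ → K) :
    ∏ m ∈ Icc 1 n \ {i, i + 1},
        lagrangeWeight a₁ a₂ t (I.map (swap i (i + 1)).toEmbedding) m (z m) =
      ∏ m ∈ Icc 1 n \ {i, i + 1}, lagrangeWeight a₁ a₂ t I m (z m) := by
  refine prod_congr rfl fun m hm => ?_
  simp only [mem_sdiff, mem_insert, mem_singleton, not_or] at hm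
  rw [lagrangeWeight_map_swap_of_ne a₁ a₂ t hi hm.2.1 hm.2.2]

lemma lagrangeTerm_comp_swap_of_iff (hi : 1 ≤ i) (hin : i < n) {I : Finset ℕ}
    (h : i ∈ I ↔ i + 1 ∈ I) (z : ℕ → K) :
    lagrangeTerm a₁ a₂ t n I (z ∘ swap i (i + 1)) = lagrangeTerm a₁ a₂ t n I z := by
  rw [lagrangeTerm_comp_swap_eq_mul hi hin, lagrangeTerm_eq_mul hi hin,
    lagrangeWeight_mul_comm_of_iff a₁ a₂ t hi h]

lemma lagrangeTerm_comp_swap_add (hgen : ∀ k l : ℕ, a₁ * t ^ k ≠ a₂ * t ^ l)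
    (hi : 1 ≤ i) (hin : i < n) {I : Finset ℕ} (hiI : i ∈ I) (hiI' : i + 1 ∉ I) (z : ℕ → K) :
    let J := I.map (swap i (i + 1)).toEmbedding
    lagrangeTerm a₁ a₂ t n I (z ∘ swap i (i + 1)) + lagrangeTerm a₁ a₂ t n J (z ∘ swap i (i + 1)) =
      lagrangeTerm a₁ a₂ t n I z + lagrangeTerm a₁ a₂ t n J z := by
  intro J
  simp only [J, lagrangeTerm_comp_swap_eq_mul hi hin, lagrangeTerm_eq_mul hi hin,
    prod_lagrangeWeight_map_swap hi, ← mul_add]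
  rw [lagrangeWeight_exchange hgen hi hiI hiI']

end Term

lemma sum_lagrangeTerm_comp_swap {K : Type*} [Field K] {a₁ a₂ t : K}
    (hgen : ∀ k l : ℕ, a₁ * t ^ k ≠ a₂ * t ^ l) {n i : ℕ} (hi : 1 ≤ i) (hin : i < n)
    (r : ℕ) (z : ℕ → K) :
    ∑ I ∈ powersetCard r (Icc 1 n), lagrangeTerm a₁ a₂ t n I (z ∘ swap i (i + 1)) =
      ∑ I ∈ powersetCard r (Icc 1 n), lagrangeTerm a₁ a₂ t n I z := by
  have hIcc : (Icc 1 n).map (swap i (i + 1)).toEmbedding = Icc 1 n :=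
    map_swap_eq_self (by simp only [mem_Icc]; omega)
  refine sum_eq_sum_of_involution _ (fun I hI => ?_) (fun I _ => map_swap_map_swap I)
    (fun I _ h => lagrangeTerm_comp_swap_of_iff hi hin (map_swap_eq_self_iff.1 h) z)
    (fun I _ h => ?_)
  · obtain ⟨hsub, hcard⟩ := mem_powersetCard.1 hI
    exact mem_powersetCard.2 ⟨hIcc ▸ map_subset_map.2 hsub, by rw [card_map, hcard]⟩
  · rw [Ne, map_swap_eq_self_iff] at h
    by_cases hiI : i ∈ I
    · exact lagrangeTerm_comp_swap_add hgen hi hin hiI (fun h' => h (iff_of_true hiI h')) z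
    · have hiI' : i + 1 ∈ I := by tauto
      have hJ := lagrangeTerm_comp_swap_add (a₁ := a₁) (a₂ := a₂) (t := t) hgen hi hin
        (I := I.map (swap i (i + 1)).toEmbedding)
        (by rwa [mem_map_swap, swap_apply_left])
        (by rwa [mem_map_swap, swap_apply_right]) z
      rw [map_swap_map_swap] at hJ
      rw [add_comm, hJ, add_comm]

lemma lagrangeF_eq_sum_lagrangeTerm (a₁ a₂ t : ℂ) (n r : ℕ) (z : ℕ → ℂ) :
    lagrangeF a₁ a₂ t n r z = ∑ I ∈ powersetCard r (Icc 1 n), lagrangeTerm a₁ a₂ t n I z := by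
  refine sum_congr rfl fun I hI => ?_
  obtain ⟨hsub, rfl⟩ := mem_powersetCard.1 hI
  have h0 : 0 ∉ I := fun h => by simpa using hsub h
  have hcard : #(Icc 1 n \ I) = n - #I := by
    rw [card_sdiff_of_subset hsub, Nat.card_Icc, Nat.add_sub_cancel]
  rw [lagrangeTerm, ← prod_sdiff hsub, mul_comm (∏ m ∈ Icc 1 n \ I, _), ← hcard,
    prod_range_card_sortedEl I fun k m =>
      (z m - a₂ * t ^ (m - (k + 1))) / (a₁ * t ^ k - a₂ * t ^ (m - (k + 1))),
    prod_range_card_sortedEl (Icc 1 n \ I) fun k m =>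
      (z m - a₁ * t ^ (m - (k + 1))) / (a₂ * t ^ k - a₁ * t ^ (m - (k + 1)))]
  have hsum : ∀ m ∈ Icc 1 n, numBelow I m + numMissingBelow I m + 1 = m := fun m hm =>
    numBelow_add_numMissingBelow h0 (mem_Icc.1 hm).1
  congr 1
  · refine prod_congr rfl fun m hm => ?_
    have := hsum m (hsub hm)
    rw [lagrangeWeight, if_pos hm, lagrangeFactor,
      show m - (numBelow I m + 1) = numMissingBelow I m by omega]
  · refine prod_congr rfl fun m hm => ?_
    obtain ⟨hmIcc, hmI⟩ := mem_sdiff.1 hm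
    have := hsum m hmIcc
    rw [lagrangeWeight, if_neg hmI, lagrangeFactor, numBelow_Icc_sdiff I (by simp at hmIcc; omega),
      show m - (numMissingBelow I m + 1) = numBelow I m by omega]

lemma lagrangeF_congr (a₁ a₂ t : ℂ) (n r : ℕ) {z w : ℕ → ℂ} (h : ∀ m ∈ Icc 1 n, z m = w m) :
    lagrangeF a₁ a₂ t n r z = lagrangeF a₁ a₂ t n r w := by
  simp only [lagrangeF_eq_sum_lagrangeTerm, lagrangeTerm]
  exact sum_congr rfl fun I _ => prod_congr rfl fun m hm => by rw [h m hm]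

theorem lagrange_symmetric_general (n r : ℕ) (a₁ a₂ t : ℂ)
    (hgen : ∀ k l : ℕ, a₁ * t ^ k ≠ a₂ * t ^ l)
    (σ : Equiv.Perm ℕ) (hσ : ∀ k ∈ Finset.Icc 1 n, σ k ∈ Finset.Icc 1 n) (z : ℕ → ℂ) :
    lagrangeF a₁ a₂ t n r (fun k => z (σ k)) = lagrangeF a₁ a₂ t n r z := by
  have hadj : ∀ i, 1 ≤ i → i < n → swap i (i + 1) ∈ invariantPerms (lagrangeF a₁ a₂ t n r) :=
    fun i hi hin w => by
      simp only [lagrangeF_eq_sum_lagrangeTerm]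
      exact sum_lagrangeTerm_comp_swap hgen hi hin r w
  set τ := Perm.ofSubtype (σ.subtypePermOfFintype hσ)
  have hτ : τ ∈ invariantPerms (lagrangeF a₁ a₂ t n r) :=
    ofSubtype_mem_of_forall_swap_mem _
      (fun x y hx hy => swap_mem_of_forall_swap_succ_mem _ hadj hx hy) _
  calc lagrangeF a₁ a₂ t n r (fun k => z (σ k))
      = lagrangeF a₁ a₂ t n r (z ∘ τ) := lagrangeF_congr a₁ a₂ t n r fun m hm => by
        simp [τ, Perm.ofSubtype_apply_of_mem _ hm]
    _ = lagrangeF a₁ a₂ t n r z := hτ z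

/-- Each Lagrange interpolation polynomial of type A is symmetric in z₁,…,z_n. -/
theorem lagrange_symmetric (n r : ℕ) (hr : r ≤ n) (a₁ a₂ t : ℂ)
    (ha₁ : a₁ ≠ 0) (ha₂ : a₂ ≠ 0) (ht : t ≠ 0)
    (hgen : ∀ k l : ℕ, a₁ * t ^ k ≠ a₂ * t ^ l)
    (σ : Equiv.Perm ℕ) (hσ : ∀ k ∈ Finset.Icc 1 n, σ k ∈ Finset.Icc 1 n) (z : ℕ → ℂ) :
    lagrangeF a₁ a₂ t n r (fun k => z (σ k)) = lagrangeF a₁ a₂ t n r z :=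
  lagrange_symmetric_general n r a₁ a₂ t hgen σ hσ z
end

section
/- Let η_i(a₂) = (z₁,…,z_i, a₂, a₂t, …, a₂t^{n−i−1}). Then f_i(a₁,a₂;t; η_i(a₂)) = ∏_{l=1}^{i} (z_l − a₂t^{n−i})/(a₁t^{l−1} − a₂t^{n−i}), and f_i(a₁,a₂;t; η_j(a₂)) = 0 whenever i > j, where η_j(a₂) = (z₁,…,z_j, a₂, a₂t, …, a₂t^{n−j−1}). -/
open scoped BigOperators

/-- The point η_j(a₂) = (w₁,…,w_j, a₂, a₂t, …, a₂t^{n−j−1}), indexed by 1,…,n. -/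
noncomputable def etaNode (w : ℕ → ℂ) (a₂ t : ℂ) (j : ℕ) : ℕ → ℂ :=
  fun k => if k ≤ j then w k else a₂ * t ^ (k - j - 1)

/-!
Splitting the sum defining `f_r` according to whether the largest index lies in `I` gives a
two-term recursion in the number of variables: `f_r` is a sum over lattice paths whose steps
carry degree-one Lagrange factors `(x - q) / (p - q)`. A local exchange identity between two
consecutive steps shows that fixing the last variable at the node `c` turns the paths for the
parameter `c` into those for `c t`. Peeling off the coordinates `a₂ t^(n-j-1), …, a₂` of `η_j`
one at a time therefore reduces `f_r(η_j)` to `f_r(a₁, a₂ t^(n-j); w)` in `j` variables; for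
`r = j` only the path with `I = {1, …, j}` is left, and for `r > j` no path survives, since the
factor putting index `j + m + 1` into `I` when `|I| = j` vanishes at `η_j`.
-/

section LagrangePath

variable {K : Type*} [Field K]

def twoPointBasis (p q x : K) : K := (x - q) / (p - q)

theorem twoPointBasis_exchange {u v t : K} (huv : u ≠ v) (hu : u ≠ v * t) (hv : v ≠ u * t)
    (x c : K) :
    twoPointBasis u (v * t) x * twoPointBasis v u c +
        twoPointBasis v (u * t) x * twoPointBasis u v c =
      twoPointBasis u (v * t) c * twoPointBasis v u x +
        twoPointBasis v (u * t) c * twoPointBasis u v x := by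
  have h₁ := sub_ne_zero.mpr huv
  have h₂ := sub_ne_zero.mpr hu
  have h₃ := sub_ne_zero.mpr hv
  have h₄ := sub_ne_zero.mpr huv.symm
  unfold twoPointBasis
  rw [div_mul_div_comm, div_mul_div_comm, div_add_div _ _ (mul_ne_zero h₂ h₄) (mul_ne_zero h₃ h₁),
    div_mul_div_comm, div_mul_div_comm, div_add_div _ _ (mul_ne_zero h₂ h₄) (mul_ne_zero h₃ h₁)]
  congr 1
  ring

/-- `f_r(a₁, c; t; z)` in `r + m` variables (`lagrangeF_eq_lagrangePath`), by recursion on whether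
the last index lies in `I`; `r` and `m` are the sizes of `I` and of its complement. -/
def lagrangePath (a₁ c t : K) (z : ℕ → K) : ℕ → ℕ → K
  | 0, 0 => 1
  | 0, m + 1 => twoPointBasis (c * t ^ m) a₁ (z (m + 1)) * lagrangePath a₁ c t z 0 m
  | r + 1, 0 => twoPointBasis (a₁ * t ^ r) c (z (r + 1)) * lagrangePath a₁ c t z r 0
  | r + 1, m + 1 =>
      twoPointBasis (a₁ * t ^ r) (c * t ^ (m + 1)) (z (r + m + 2)) *
          lagrangePath a₁ c t z r (m + 1) +
        twoPointBasis (c * t ^ m) (a₁ * t ^ (r + 1)) (z (r + m + 2)) *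
          lagrangePath a₁ c t z (r + 1) m

variable {a₁ c t : K}

theorem lagrangePath_congr {z z' : ℕ → K} {r m : ℕ}
    (h : ∀ p, 1 ≤ p → p ≤ r + m → z p = z' p) :
    lagrangePath a₁ c t z r m = lagrangePath a₁ c t z' r m := by
  induction r generalizing m with
  | zero =>
    induction m with
    | zero => simp only [lagrangePath]
    | succ m ihm =>
      simp only [lagrangePath]
      rw [h (m + 1) (by omega) (by omega), ihm fun p hp hpm => h p hp (by omega)]
  | succ r ihr =>
    induction m with
    | zero =>
      simp only [lagrangePath]
      rw [h (r + 1) (by omega) (by omega), ihr fun p hp hpm => h p hp (by omega)]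
    | succ m ihm =>
      simp only [lagrangePath]
      rw [h (r + m + 2) (by omega) (by omega), ihm fun p hp hpm => h p hp (by omega),
        ihr fun p hp hpm => h p hp (by omega)]

theorem lagrangePath_zero_right (z : ℕ → K) (r : ℕ) :
    lagrangePath a₁ c t z r 0 = ∏ l ∈ Finset.Icc 1 r, twoPointBasis (a₁ * t ^ (l - 1)) c (z l) := by
  induction r with
  | zero => simp [lagrangePath]
  | succ r ih =>
    rw [lagrangePath, ih, Finset.prod_Icc_succ_top (by omega), Nat.add_sub_cancel, mul_comm]

theorem lagrangePath_shift_zero (hc : a₁ ≠ c) (z : ℕ → K) (m : ℕ) :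
    lagrangePath a₁ (c * t) t z 0 m =
      twoPointBasis (c * t ^ m) a₁ c * lagrangePath a₁ c t z 0 m := by
  induction m with
  | zero =>
    simp only [lagrangePath, pow_zero, mul_one, twoPointBasis, div_self (sub_ne_zero.2 hc.symm)]
  | succ m ih =>
    simp only [lagrangePath, ih]
    unfold twoPointBasis
    ring

theorem lagrangePath_shift_succ (hc : ∀ k l : ℕ, a₁ * t ^ k ≠ c * t ^ l) (z : ℕ → K) (r m : ℕ) :
    lagrangePath a₁ (c * t) t z (r + 1) m =
      twoPointBasis (c * t ^ m) (a₁ * t ^ (r + 1)) c * lagrangePath a₁ c t z (r + 1) m +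
        twoPointBasis (a₁ * t ^ r) (c * t ^ (m + 1)) c * lagrangePath a₁ c t z r (m + 1) := by
  have hE := fun r m' : ℕ => twoPointBasis_exchange (u := a₁ * t ^ r) (v := c * t ^ m')
    (hc r m') (by rw [mul_assoc, ← pow_succ]; exact hc r (m' + 1))
    (by rw [mul_assoc, ← pow_succ]; exact (hc (r + 1) m').symm)
  unfold twoPointBasis at hE
  -- Expanding both sides by one step leaves the same three states; the coefficients of the
  -- outer two agree by the symmetry `x ↔ c`, that of the middle state `(r, m)` by `hE r m`.
  induction r generalizing m with
  | zero =>
    induction m with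
    | zero =>
      conv_lhs => rw [lagrangePath]
      rw [lagrangePath_shift_zero (by simpa using hc 0 0)]
      simp only [lagrangePath]
      unfold twoPointBasis
      linear_combination hE 0 0 (z 1) c
    | succ m ihm =>
      conv_lhs => rw [lagrangePath]
      rw [lagrangePath_shift_zero (by simpa using hc 0 0), ihm, lagrangePath.eq_4 a₁ c t z 0 m,
        lagrangePath.eq_2 a₁ c t z (m + 1)]
      unfold twoPointBasis
      linear_combination (norm := ring_nf)
        lagrangePath a₁ c t z 0 (m + 1) * hE 0 (m + 1) (z (m + 2)) c
  | succ r ihr =>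
    induction m with
    | zero =>
      conv_lhs => rw [lagrangePath]
      rw [ihr, lagrangePath.eq_3 a₁ c t z (r + 1), lagrangePath.eq_4 a₁ c t z r 0]
      unfold twoPointBasis
      linear_combination (norm := ring_nf)
        lagrangePath a₁ c t z (r + 1) 0 * hE (r + 1) 0 (z (r + 2)) c
    | succ m ihm =>
      conv_lhs => rw [lagrangePath]
      rw [ihr, ihm, lagrangePath.eq_4 a₁ c t z (r + 1) m, lagrangePath.eq_4 a₁ c t z r (m + 1)]
      unfold twoPointBasis
      linear_combination (norm := ring_nf)
        lagrangePath a₁ c t z (r + 1) (m + 1) * hE (r + 1) (m + 1) (z (r + m + 3)) c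

end LagrangePath

theorem sort_insert_of_forall_lt {s : Finset ℕ} {a : ℕ} (h : ∀ b ∈ s, b < a) :
    (insert a s).sort (· ≤ ·) = s.sort (· ≤ ·) ++ [a] := by
  have ha : a ∉ s := fun ha => (h a ha).false
  refine List.Perm.eq_of_pairwise' (Finset.pairwise_sort _ _) ?_ ?_
  · refine List.pairwise_append.2 ⟨Finset.pairwise_sort _ _, List.pairwise_singleton _ _, ?_⟩
    intro b hb a' ha'
    rw [List.mem_singleton.1 ha']
    exact (h b ((Finset.mem_sort _).1 hb)).le
  · refine Multiset.coe_eq_coe.1 ?_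
    rw [← Multiset.coe_add, Finset.sort_eq, Finset.sort_eq, Finset.insert_val_of_notMem ha,
      Multiset.coe_singleton, add_comm, Multiset.singleton_add]

theorem sortedEl_insert_of_lt_card {s : Finset ℕ} {a k : ℕ} (h : ∀ b ∈ s, b < a)
    (hk : k < s.card) :
    sortedEl (insert a s) k = sortedEl s k := by
  rw [sortedEl, sortedEl, sort_insert_of_forall_lt h,
    List.getD_append _ _ _ _ (by rwa [Finset.length_sort])]

theorem sortedEl_insert_card {s : Finset ℕ} {a : ℕ} (h : ∀ b ∈ s, b < a) :
    sortedEl (insert a s) s.card = a := by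
  rw [sortedEl, sort_insert_of_forall_lt h,
    List.getD_append_right _ _ _ _ (by rw [Finset.length_sort])]
  simp

noncomputable def sortedProd (p q t : ℂ) (S : Finset ℕ) (z : ℕ → ℂ) : ℂ :=
  ∏ k ∈ Finset.range S.card,
    twoPointBasis (p * t ^ k) (q * t ^ (sortedEl S k - (k + 1))) (z (sortedEl S k))

theorem sortedProd_insert {p q t : ℂ} {S : Finset ℕ} {a : ℕ} (h : ∀ b ∈ S, b < a) (z : ℕ → ℂ) :
    sortedProd p q t (insert a S) z =
      sortedProd p q t S z * twoPointBasis (p * t ^ S.card) (q * t ^ (a - (S.card + 1))) (z a) := by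
  have ha : a ∉ S := fun ha => (h a ha).false
  rw [sortedProd, sortedProd, Finset.card_insert_of_notMem ha, Finset.prod_range_succ,
    sortedEl_insert_card h]
  congr 1
  refine Finset.prod_congr rfl fun k hk => ?_
  rw [sortedEl_insert_of_lt_card h (Finset.mem_range.1 hk)]

theorem lagrangeF_eq_sum (a₁ a₂ t : ℂ) (n r : ℕ) (z : ℕ → ℂ) :
    lagrangeF a₁ a₂ t n r z = ∑ I ∈ Finset.powersetCard r (Finset.Icc 1 n),
      sortedProd a₁ a₂ t I z * sortedProd a₂ a₁ t (Finset.Icc 1 n \ I) z := by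
  refine Finset.sum_congr rfl fun I hI => ?_
  obtain ⟨hIn, hIr⟩ := Finset.mem_powersetCard.1 hI
  rw [sortedProd, sortedProd, Finset.card_sdiff_of_subset hIn, hIr, Nat.card_Icc,
    Nat.add_sub_cancel]
  rfl

theorem lagrangeF_of_lt (a₁ a₂ t : ℂ) {n r : ℕ} (h : n < r) (z : ℕ → ℂ) :
    lagrangeF a₁ a₂ t n r z = 0 := by
  rw [lagrangeF_eq_sum, Finset.powersetCard_eq_empty.2 (by simpa using h), Finset.sum_empty]

section LastIndex

variable {a₁ c t : ℂ} {z : ℕ → ℂ} {N R : ℕ} {I : Finset ℕ}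

theorem sortedProd_mul_sortedProd_sdiff_insert (hI : I ⊆ Finset.Icc 1 N) (hR : I.card = R) :
    sortedProd a₁ c t I z * sortedProd c a₁ t (insert (N + 1) (Finset.Icc 1 N) \ I) z =
      sortedProd a₁ c t I z * sortedProd c a₁ t (Finset.Icc 1 N \ I) z *
        twoPointBasis (c * t ^ (N - R)) (a₁ * t ^ R) (z (N + 1)) := by
  have hlt : ∀ b ∈ Finset.Icc 1 N \ I, b < N + 1 := fun b hb => by
    have := (Finset.mem_Icc.1 (Finset.mem_sdiff.1 hb).1).2
    omega
  have hR' := Finset.card_le_card hI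
  rw [Finset.insert_sdiff_of_notMem _ fun h => by simpa using hI h, sortedProd_insert hlt,
    Finset.card_sdiff_of_subset hI, hR, Nat.card_Icc, Nat.add_sub_cancel, mul_assoc]
  simp only [Nat.card_Icc, Nat.add_sub_cancel] at hR'
  rw [show N + 1 - (N - R + 1) = R by omega]

theorem sortedProd_insert_mul_sortedProd_sdiff (hI : I ⊆ Finset.Icc 1 N) (hR : I.card = R) :
    sortedProd a₁ c t (insert (N + 1) I) z *
        sortedProd c a₁ t (insert (N + 1) (Finset.Icc 1 N) \ insert (N + 1) I) z =
      sortedProd a₁ c t I z * sortedProd c a₁ t (Finset.Icc 1 N \ I) z *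
        twoPointBasis (a₁ * t ^ R) (c * t ^ (N - R)) (z (N + 1)) := by
  have hlt : ∀ b ∈ I, b < N + 1 := fun b hb => by
    have := (Finset.mem_Icc.1 (hI hb)).2
    omega
  rw [sortedProd_insert hlt, Finset.insert_sdiff_insert,
    Finset.sdiff_insert_of_notMem (by simp), hR, show N + 1 - (R + 1) = N - R by omega]
  ring

end LastIndex

theorem lagrangeF_succ_zero (a₁ c t : ℂ) (z : ℕ → ℂ) (N : ℕ) :
    lagrangeF a₁ c t (N + 1) 0 z =
      twoPointBasis (c * t ^ N) a₁ (z (N + 1)) * lagrangeF a₁ c t N 0 z := by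
  rw [lagrangeF_eq_sum, lagrangeF_eq_sum, ← Finset.insert_Icc_right_eq_Icc_add_one (by omega)]
  simp only [Finset.powersetCard_zero, Finset.sum_singleton]
  rw [sortedProd_mul_sortedProd_sdiff_insert (Finset.empty_subset _) Finset.card_empty]
  simp only [Nat.sub_zero, pow_zero, mul_one]
  ring

theorem lagrangeF_succ_succ (a₁ c t : ℂ) (z : ℕ → ℂ) (N R : ℕ) :
    lagrangeF a₁ c t (N + 1) (R + 1) z =
      twoPointBasis (c * t ^ (N - (R + 1))) (a₁ * t ^ (R + 1)) (z (N + 1)) *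
          lagrangeF a₁ c t N (R + 1) z +
        twoPointBasis (a₁ * t ^ R) (c * t ^ (N - R)) (z (N + 1)) * lagrangeF a₁ c t N R z := by
  have hN : N + 1 ∉ Finset.Icc 1 N := by simp
  rw [lagrangeF_eq_sum, lagrangeF_eq_sum, lagrangeF_eq_sum,
    ← Finset.insert_Icc_right_eq_Icc_add_one (by omega), Finset.powersetCard_succ_insert hN,
    Finset.sum_union, Finset.sum_image, Finset.mul_sum, Finset.mul_sum]
  · congr 1
    · refine Finset.sum_congr rfl fun I hI => ?_
      obtain ⟨hIN, hIR⟩ := Finset.mem_powersetCard.1 hI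
      rw [sortedProd_mul_sortedProd_sdiff_insert hIN hIR, mul_comm]
    · refine Finset.sum_congr rfl fun I hI => ?_
      obtain ⟨hIN, hIR⟩ := Finset.mem_powersetCard.1 hI
      rw [sortedProd_insert_mul_sortedProd_sdiff hIN hIR, mul_comm]
  · intro I hI J hJ hIJ
    have hI' : N + 1 ∉ I := fun h => hN ((Finset.mem_powersetCard.1 hI).1 h)
    have hJ' : N + 1 ∉ J := fun h => hN ((Finset.mem_powersetCard.1 hJ).1 h)
    rw [← Finset.erase_insert hI', ← Finset.erase_insert hJ']
    exact congrArg (·.erase (N + 1)) hIJ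
  · refine Finset.disjoint_left.2 fun I hI hI' => ?_
    obtain ⟨J, -, rfl⟩ := Finset.mem_image.1 hI'
    exact hN ((Finset.mem_powersetCard.1 hI).1 (Finset.mem_insert_self _ _))

theorem lagrangeF_eq_lagrangePath (a₁ c t : ℂ) (z : ℕ → ℂ) (r m : ℕ) :
    lagrangeF a₁ c t (r + m) r z = lagrangePath a₁ c t z r m := by
  induction r generalizing m with
  | zero =>
    induction m with
    | zero => simp [lagrangeF_eq_sum, sortedProd, lagrangePath]
    | succ m ihm =>
      rw [zero_add] at ihm ⊢
      rw [lagrangeF_succ_zero, ihm, lagrangePath]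
  | succ r ihr =>
    induction m with
    | zero =>
      have ihr0 := ihr 0
      rw [add_zero] at ihr0 ⊢
      rw [lagrangeF_succ_succ, lagrangeF_of_lt _ _ _ (Nat.lt_succ_self r), ihr0, Nat.sub_self,
        pow_zero, mul_one, mul_zero, zero_add, lagrangePath]
    | succ m ihm =>
      rw [show r + 1 + (m + 1) = r + 1 + m + 1 by omega, lagrangeF_succ_succ, ihm,
        show r + 1 + m = r + (m + 1) by omega, ihr, lagrangePath,
        show r + (m + 1) - (r + 1) = m by omega, show r + (m + 1) - r = m + 1 by omega,
        show r + (m + 1) + 1 = r + m + 2 by omega]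
      ring

section Eta

variable {a₁ a₂ t : ℂ}

theorem lagrangePath_etaNode (hgen : ∀ k l : ℕ, a₁ * t ^ k ≠ a₂ * t ^ l) (w : ℕ → ℂ)
    (k r m : ℕ) :
    lagrangePath a₁ a₂ t (etaNode w a₂ t (r + m)) r (m + k) =
      lagrangePath a₁ (a₂ * t ^ k) t w r m := by
  induction k generalizing r m with
  | zero =>
    rw [add_zero, pow_zero, mul_one]
    exact lagrangePath_congr fun p _ hp => if_pos hp
  | succ k ih =>
    have hgen' : ∀ k' l : ℕ, a₁ * t ^ k' ≠ a₂ * t ^ k * t ^ l := fun k' l => by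
      rw [mul_assoc, ← pow_add]; exact hgen k' (k + l)
    rw [pow_succ, ← mul_assoc, show m + (k + 1) = m + k + 1 by omega]
    cases r with
    | zero =>
      have hη : etaNode w a₂ t (0 + m) (m + k + 1) = a₂ * t ^ k := by
        rw [etaNode, if_neg (by omega), show m + k + 1 - (0 + m) - 1 = k by omega]
      rw [lagrangePath, ih, hη, lagrangePath_shift_zero (by simpa using hgen' 0 0)]
      unfold twoPointBasis
      ring
    | succ r =>
      have hη : etaNode w a₂ t (r + 1 + m) (r + (m + k) + 2) = a₂ * t ^ k := by
        rw [etaNode, if_neg (by omega), show r + (m + k) + 2 - (r + 1 + m) - 1 = k by omega]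
      have ih' := ih r (m + 1)
      rw [show r + (m + 1) = r + 1 + m by omega, show m + 1 + k = m + k + 1 by omega] at ih'
      rw [lagrangePath, ih', ih, hη, lagrangePath_shift_succ hgen']
      unfold twoPointBasis
      ring

theorem lagrangePath_etaNode_of_lt (w : ℕ → ℂ) {j r : ℕ} (hjr : j < r) (m : ℕ) :
    lagrangePath a₁ a₂ t (etaNode w a₂ t j) r m = 0 := by
  induction r generalizing m with
  | zero => omega
  | succ r ihr =>
    have hstep : ∀ m',
        twoPointBasis (a₁ * t ^ r) (a₂ * t ^ m') (etaNode w a₂ t j (r + m' + 1)) *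
          lagrangePath a₁ a₂ t (etaNode w a₂ t j) r m' = 0 := by
      intro m'
      rcases (Nat.lt_succ_iff.1 hjr).eq_or_lt with rfl | hj
      · simp [etaNode, twoPointBasis, show j + m' + 1 - j - 1 = m' by omega]
      · rw [ihr hj, mul_zero]
    induction m with
    | zero => simpa [lagrangePath] using hstep 0
    | succ m ihm =>
      rw [lagrangePath, ihm, mul_zero, add_zero]
      exact hstep (m + 1)

end Eta

theorem lagrange_eta_general (n i : ℕ) (hi : i ≤ n) (a₁ a₂ t : ℂ)
    (hgen : ∀ k l : ℕ, a₁ * t ^ k ≠ a₂ * t ^ l) :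
    (∀ w : ℕ → ℂ,
      lagrangeF a₁ a₂ t n i (etaNode w a₂ t i) =
        ∏ l ∈ Finset.Icc 1 i,
          (w l - a₂ * t ^ (n - i)) / (a₁ * t ^ (l - 1) - a₂ * t ^ (n - i))) ∧
    (∀ j : ℕ, j < i → ∀ w : ℕ → ℂ,
      lagrangeF a₁ a₂ t n i (etaNode w a₂ t j) = 0) := by
  obtain ⟨m, rfl⟩ := Nat.exists_eq_add_of_le hi
  refine ⟨fun w => ?_, fun j hj w => ?_⟩
  · have h := lagrangePath_etaNode hgen w m i 0
    rw [add_zero, zero_add] at h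
    rw [lagrangeF_eq_lagrangePath, h, lagrangePath_zero_right, Nat.add_sub_cancel_left]
    rfl
  · rw [lagrangeF_eq_lagrangePath, lagrangePath_etaNode_of_lt w hj]

/-- Triangularity: f_i(a₁,a₂;t;η_i(a₂)) factorizes, and f_i(a₁,a₂;t;η_j(a₂)) = 0 for i > j. -/
theorem lagrange_eta (n i : ℕ) (hi : i ≤ n) (a₁ a₂ t : ℂ)
    (ha₁ : a₁ ≠ 0) (ha₂ : a₂ ≠ 0) (ht : t ≠ 0)
    (hgen : ∀ k l : ℕ, a₁ * t ^ k ≠ a₂ * t ^ l) :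
    (∀ w : ℕ → ℂ,
      lagrangeF a₁ a₂ t n i (etaNode w a₂ t i) =
        ∏ l ∈ Finset.Icc 1 i,
          (w l - a₂ * t ^ (n - i)) / (a₁ * t ^ (l - 1) - a₂ * t ^ (n - i))) ∧
    (∀ j : ℕ, j < i → ∀ w : ℕ → ℂ,
      lagrangeF a₁ a₂ t n i (etaNode w a₂ t j) = 0) :=
  lagrange_eta_general n i hi a₁ a₂ t hgen
end

section
/- Define the upper triangular (n+1)×(n+1) matrices U_A and U_A* by u^A_{ij} = (−q^α a₁^{-1}a₂)^{j−i} t^{C(j,2)−C(i,2)} C_t(j,i) (a₁b₁t^{n−j};t)_{j−i} / (q^α a₂b₂t^{2i};t)_{j−i} for i ≤ j (0 otherwise), and u^{A*}_{ij} = (q^α a₁^{-1}a₂ t^{j−1})^{j−i} C_t(j,i) (a₁b₁t^{n−j};t)_{j−i} / (q^α a₂b₂ t^{j+i−1};t)_{j−i} for i ≤ j (0 otherwise). Then U_A · U_A* = I (the identity matrix). -/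
/-!
Both matrices are upper triangular, so the diagonal entries of the product are `1 · 1` and only
the entries `(i, j)` with `j = i + D + 1` need work. By the trinomial revision
`[k, i][j, k] = [j, i][D + 1, k - i]` and by splitting the shifted factorials, each summand
`u^A_{ik} u^{A*}_{kj}` is a common factor times `[D+1, s] (-1)^s t^(s(s-1)/2) t^(-Ds) (y t^s; t)_D`
with `s = k - i`, and the alternating sum of these vanishes because it is a `(D + 1)`-st
`t`-difference of a polynomial of degree `D` in `t^s`.
-/
open scoped BigOperators

/-- The c-shifted factorial (x;c)_k = (1−x)(1−cx)⋯(1−c^{k−1}x). -/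
noncomputable def qPoch (x c : ℂ) (k : ℕ) : ℂ :=
  ∏ i ∈ Finset.range k, (1 - c ^ i * x)

/-- The c-binomial coefficient, zero when k > m. -/
noncomputable def qBinom (c : ℂ) (m k : ℕ) : ℂ :=
  if k ≤ m then qPoch c c m / (qPoch c c (m - k) * qPoch c c k) else 0

/-- The upper triangular factor U_A of the Gauss decomposition of A. -/
noncomputable def matUA (n : ℕ) (qa a₁ a₂ b₁ b₂ t : ℂ) :
    Matrix (Fin (n + 1)) (Fin (n + 1)) ℂ :=
  Matrix.of fun i j =>
    if (i : ℕ) ≤ (j : ℕ) then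
      (-(qa * a₁⁻¹ * a₂)) ^ ((j : ℕ) - (i : ℕ)) *
        t ^ ((j : ℕ) * ((j : ℕ) - 1) / 2 - (i : ℕ) * ((i : ℕ) - 1) / 2) *
        qBinom t (j : ℕ) (i : ℕ) *
        (qPoch (a₁ * b₁ * t ^ (n - (j : ℕ))) t ((j : ℕ) - (i : ℕ)) /
          qPoch (qa * a₂ * b₂ * t ^ (2 * (i : ℕ))) t ((j : ℕ) - (i : ℕ)))
    else 0

/-- The claimed inverse U_A* of U_A. -/
noncomputable def matUAstar (n : ℕ) (qa a₁ a₂ b₁ b₂ t : ℂ) :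
    Matrix (Fin (n + 1)) (Fin (n + 1)) ℂ :=
  Matrix.of fun i j =>
    if (i : ℕ) ≤ (j : ℕ) then
      (qa * a₁⁻¹ * a₂ * t ^ ((j : ℤ) - 1)) ^ ((j : ℕ) - (i : ℕ)) *
        qBinom t (j : ℕ) (i : ℕ) *
        (qPoch (a₁ * b₁ * t ^ (n - (j : ℕ))) t ((j : ℕ) - (i : ℕ)) /
          qPoch (qa * a₂ * b₂ * t ^ ((j : ℤ) + (i : ℕ) - 1)) t ((j : ℕ) - (i : ℕ)))
    else 0

open Finset

section QPochhammer

variable (x t : ℂ)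

@[simp]
lemma qPoch_zero : qPoch x t 0 = 1 := prod_range_zero _

lemma qPoch_succ (k : ℕ) : qPoch x t (k + 1) = qPoch x t k * (1 - t ^ k * x) :=
  prod_range_succ _ _

lemma qPoch_add (a b : ℕ) : qPoch x t (a + b) = qPoch x t a * qPoch (x * t ^ a) t b := by
  simp only [qPoch, prod_range_add, pow_add]
  exact congrArg _ (prod_congr rfl fun _ _ => by ring)

lemma qPoch_succ' (k : ℕ) : qPoch x t (k + 1) = (1 - x) * qPoch (x * t) t k := by
  rw [add_comm, qPoch_add, pow_one, qPoch_succ, qPoch_zero, pow_zero, one_mul, one_mul]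

variable {x t}

lemma qPoch_eq_zero_of_pow_mul_eq_one {k d : ℕ} (hk : k < d) (h : t ^ k * x = 1) :
    qPoch x t d = 0 :=
  prod_eq_zero (mem_range.2 hk) (by rw [h, sub_self])

lemma qPoch_ne_zero_of_le {a b : ℕ} (hab : a ≤ b) (h : qPoch x t b ≠ 0) :
    qPoch x t a ≠ 0 := by
  obtain ⟨c, rfl⟩ := Nat.exists_eq_add_of_le hab
  rw [qPoch_add] at h
  exact left_ne_zero_of_mul h

lemma qPoch_self_ne_zero (ht : ∀ m : ℤ, m ≠ 0 → t ^ m ≠ 1) (m : ℕ) :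
    qPoch t t m ≠ 0 :=
  prod_ne_zero_iff.2 fun l _ h => ht (l + 1) (by omega) <| by
    rw [← pow_succ, sub_eq_zero] at h
    exact_mod_cast h.symm

end QPochhammer

section QBinomial

variable {t : ℂ}

lemma qBinom_add_left (a b : ℕ) :
    qBinom t (a + b) a = qPoch t t (a + b) / (qPoch t t b * qPoch t t a) := by
  rw [qBinom, if_pos (Nat.le_add_right a b), Nat.add_sub_cancel_left]

lemma qBinom_of_lt {m k : ℕ} (h : m < k) : qBinom t m k = 0 :=
  if_neg h.not_ge

lemma qBinom_self (hq : ∀ m, qPoch t t m ≠ 0) (m : ℕ) : qBinom t m m = 1 := by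
  simpa [hq m] using qBinom_add_left (t := t) m 0

lemma qBinom_zero_right (hq : ∀ m, qPoch t t m ≠ 0) (m : ℕ) : qBinom t m 0 = 1 := by
  simpa [hq m] using qBinom_add_left (t := t) 0 m

lemma qBinom_succ_succ (hq : ∀ m, qPoch t t m ≠ 0) (m k : ℕ) :
    qBinom t (m + 1) (k + 1) = qBinom t m k + t ^ (k + 1) * qBinom t m (k + 1) := by
  rcases lt_trichotomy k m with hkm | rfl | hmk
  · obtain ⟨r, rfl⟩ := Nat.exists_eq_add_of_lt hkm
    rw [show k + r + 1 + 1 = (k + 1) + (r + 1) by ring, show k + r + 1 = k + (r + 1) by ring,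
      qBinom_add_left, qBinom_add_left, show k + (r + 1) = (k + 1) + r by ring, qBinom_add_left,
      show k + 1 + (r + 1) = (k + 1 + r) + 1 by ring, qPoch_succ t t (k + 1 + r),
      qPoch_succ t t r, qPoch_succ t t k]
    have hk := hq k
    have hr := hq r
    have hk' := right_ne_zero_of_mul (qPoch_succ t t k ▸ hq (k + 1))
    have hr' := right_ne_zero_of_mul (qPoch_succ t t r ▸ hq (r + 1))
    rw [← mul_div_assoc, div_add_div _ _ (by simp [*]) (by simp [*]),
      div_eq_div_iff (by simp [*]) (by simp [*])]
    ring
  · rw [qBinom_self hq, qBinom_self hq, qBinom_of_lt (Nat.lt_succ_self k), mul_zero, add_zero]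
  · rw [qBinom_of_lt (by omega), qBinom_of_lt hmk, qBinom_of_lt (by omega), mul_zero, add_zero]

lemma qBinom_mul_qBinom (hq : ∀ m, qPoch t t m ≠ 0) (a b c : ℕ) :
    qBinom t (a + b) a * qBinom t (a + b + c) (a + b) =
      qBinom t (a + b + c) a * qBinom t (b + c) b := by
  rw [qBinom_add_left, qBinom_add_left, add_assoc, qBinom_add_left, qBinom_add_left]
  have := hq a
  have := hq b
  have := hq c
  have := hq (a + b)
  have := hq (b + c)
  field_simp

lemma qPoch_eq_sum_qBinom (hq : ∀ m, qPoch t t m ≠ 0) (x : ℂ) (d : ℕ) :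
    qPoch x t d = ∑ s ∈ range (d + 1), qBinom t d s * (-1) ^ s * t ^ s.choose 2 * x ^ s := by
  induction d generalizing x with
  | zero => simp [qBinom_self hq]
  | succ d ih =>
    set g : ℕ → ℂ := fun s => qBinom t d s * (-1) ^ s * t ^ s.choose 2 * (x * t) ^ s with hg
    have hstep : ∀ s, qBinom t (d + 1) (s + 1) * (-1) ^ (s + 1) * t ^ (s + 1).choose 2 *
        x ^ (s + 1) = -x * g s + g (s + 1) := fun s => by
      simp only [hg, qBinom_succ_succ hq, Nat.choose_succ_succ', Nat.choose_one_right]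
      ring
    have hlast : g (d + 1) = 0 := by simp [hg, qBinom_of_lt d.lt_succ_self]
    have hshift : ∑ s ∈ range (d + 1), g (s + 1) + g 0 = ∑ s ∈ range (d + 1), g s := by
      rw [← sum_range_succ', sum_range_succ, hlast, add_zero]
    have hg0 : g 0 = 1 := by simp [hg, qBinom_zero_right hq]
    rw [sum_range_succ', sum_congr rfl fun s _ => hstep s, sum_add_distrib, ← mul_sum,
      qPoch_succ', ih, ← hshift, hg0]
    simp only [qBinom_zero_right hq, pow_zero, Nat.choose_zero_succ, mul_one]
    ring

/-- A `(D + 1)`-st `t`-difference kills polynomials of degree `D` in `t ^ s`: expanding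
`(y t^s; t)_D` by the q-binomial theorem, the monomial `t^(m s)` contributes
`(c t^m; t)_(D+1)`, whose factor of index `D - m` is `1 - c t^D = 0`. -/
lemma sum_qBinom_mul_qPoch_eq_zero (hq : ∀ m, qPoch t t m ≠ 0) {c : ℂ} {D : ℕ}
    (hc : c * t ^ D = 1) (y : ℂ) :
    ∑ s ∈ range (D + 2), qBinom t (D + 1) s * (-1) ^ s * t ^ s.choose 2 * c ^ s *
      qPoch (y * t ^ s) t D = 0 := by
  simp_rw [qPoch_eq_sum_qBinom hq (y * t ^ _) D, mul_sum]
  rw [sum_comm]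
  refine sum_eq_zero fun m hm => ?_
  have hm : m ≤ D := Nat.lt_succ_iff.1 (mem_range.1 hm)
  have hvanish : qPoch (c * t ^ m) t (D + 1) = 0 :=
    qPoch_eq_zero_of_pow_mul_eq_one (k := D - m) (by omega) <| by
      rw [mul_left_comm, ← pow_add, Nat.sub_add_cancel hm, hc]
  rw [qPoch_eq_sum_qBinom hq] at hvanish
  rw [← mul_zero (qBinom t D m * (-1) ^ m * t ^ m.choose 2 * y ^ m), ← hvanish, mul_sum]
  exact sum_congr rfl fun s _ => by ring

end QBinomial

section Summand

variable {t : ℂ}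

/-- The summand `k = I + s` of the entry `(I, I + D + 1)` of `U_A U_A*`, with `x = q^α a₂ / a₁`,
`y = q^α a₂ b₂ t^(2I)` and `z = a₁ b₁ t^(n-I-D-1)`, is a factor independent of `s` times the
summand of `sum_qBinom_mul_qPoch_eq_zero`. -/
lemma product_summand_eq (hq : ∀ m, qPoch t t m ≠ 0) {x y z c : ℂ} {I s e D : ℕ}
    (hsD : s + e = D + 1) (hc : c * t ^ D = 1) (hy : qPoch y t (2 * D + 1) ≠ 0) :
    (-x) ^ s * t ^ (I * s + s.choose 2) * qBinom t (I + s) I *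
        (qPoch (z * t ^ e) t s / qPoch y t s) *
      ((x * t ^ (I + D)) ^ e * qBinom t (I + D + 1) (I + s) *
        (qPoch z t e / qPoch (y * t ^ (D + s)) t e)) =
    x ^ (D + 1) * t ^ ((I + D) * (D + 1)) * qBinom t (I + D + 1) I * qPoch z t (D + 1) /
        qPoch y t (2 * D + 1) *
      (qBinom t (D + 1) s * (-1) ^ s * t ^ s.choose 2 * c ^ s * qPoch (y * t ^ s) t D) := by
  have hbin : qBinom t (I + s) I * qBinom t (I + D + 1) (I + s) =
      qBinom t (I + D + 1) I * qBinom t (D + 1) s := by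
    rw [add_assoc I D, ← hsD, ← add_assoc, qBinom_mul_qBinom hq]
  have hnum : qPoch z t (D + 1) = qPoch z t e * qPoch (z * t ^ e) t s := by
    rw [← hsD, add_comm, qPoch_add]
  have hden : qPoch y t (2 * D + 1) =
      qPoch y t s * qPoch (y * t ^ s) t D * qPoch (y * t ^ (D + s)) t e := by
    rw [show 2 * D + 1 = s + D + e by omega, qPoch_add, qPoch_add, add_comm s D]
  have hpow : t ^ (I * s) * t ^ ((I + D) * e) = t ^ ((I + D) * (D + 1)) * c ^ s := by
    rw [← hsD]
    linear_combination (-(t ^ (I * s) * t ^ ((I + D) * e))) * congrArg (· ^ s) hc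
  rw [hden] at hy
  have hA := left_ne_zero_of_mul (left_ne_zero_of_mul hy)
  have hB := right_ne_zero_of_mul (left_ne_zero_of_mul hy)
  have hC := right_ne_zero_of_mul hy
  calc _ = (-1) ^ s * x ^ (s + e) * t ^ s.choose 2 * (t ^ (I * s) * t ^ ((I + D) * e)) *
          (qBinom t (I + s) I * qBinom t (I + D + 1) (I + s)) *
          (qPoch z t e * qPoch (z * t ^ e) t s) /
          (qPoch y t s * qPoch (y * t ^ (D + s)) t e) := by
        ring
    _ = _ := by
      rw [hpow, hbin, ← hnum, hden, hsD]
      field_simp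

end Summand

lemma Matrix.IsUpperTriangular.mul_apply_eq_sum_Ico {R : Type*} [NonUnitalNonAssocSemiring R]
    {m : ℕ} {A B : Matrix (Fin m) (Fin m) R} (hA : A.IsUpperTriangular)
    (hB : B.IsUpperTriangular) (i j : Fin m) (c : ℕ → R)
    (hc : ∀ k : Fin m, i ≤ k → k ≤ j → A i k * B k j = c k) :
    (A * B) i j = ∑ k ∈ Ico (i : ℕ) (j + 1), c k := by
  let c' : ℕ → R := fun k => if (i : ℕ) ≤ k ∧ k < j + 1 then c k else 0
  have hterm : ∀ k : Fin m, A i k * B k j = c' k := fun k => by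
    simp only [c']
    split_ifs with h
    · exact hc k h.1 (Nat.lt_succ_iff.1 h.2)
    · rcases not_and_or.1 h with h | h
      · rw [hA (Fin.lt_def.2 (not_le.1 h)), zero_mul]
      · rw [hB (show j < k from Fin.lt_def.2 (by omega)), mul_zero]
  rw [Matrix.mul_apply, sum_congr rfl fun k _ => hterm k, Fin.sum_univ_eq_sum_range c' m,
    ← sum_filter]
  congr 1
  ext k
  simp only [mem_filter, mem_range, mem_Ico]
  omega

lemma Nat.add_choose_two (a b : ℕ) : (a + b).choose 2 = a.choose 2 + a * b + b.choose 2 := by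
  induction b with
  | zero => simp
  | succ b ih =>
    rw [← add_assoc, Nat.choose_succ_succ', ih, Nat.choose_succ_succ', Nat.choose_one_right,
      Nat.choose_one_right]
    ring

section Entries

variable {n : ℕ} {qa a₁ a₂ b₁ b₂ t : ℂ}

lemma matUA_isUpperTriangular : (matUA n qa a₁ a₂ b₁ b₂ t).IsUpperTriangular :=
  fun _ _ h => if_neg (not_le.2 h)

lemma matUAstar_isUpperTriangular : (matUAstar n qa a₁ a₂ b₁ b₂ t).IsUpperTriangular :=
  fun _ _ h => if_neg (not_le.2 h)

lemma matUA_apply_of_eq_add {i j : Fin (n + 1)} {s : ℕ} (h : (j : ℕ) = i + s) :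
    matUA n qa a₁ a₂ b₁ b₂ t i j =
      (-(qa * a₁⁻¹ * a₂)) ^ s * t ^ (i * s + s.choose 2) * qBinom t (i + s) i *
        (qPoch (a₁ * b₁ * t ^ (n - (i + s))) t s /
          qPoch (qa * a₂ * b₂ * t ^ (2 * (i : ℕ))) t s) := by
  have hexp : (i + s) * (i + s - 1) / 2 - i * (i - 1) / 2 = i * s + s.choose 2 := by
    rw [← Nat.choose_two_right, ← Nat.choose_two_right, Nat.add_choose_two]
    omega
  simp only [matUA, Matrix.of_apply, h, Nat.le_add_right, if_true, Nat.add_sub_cancel_left,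
    hexp]

lemma matUAstar_apply_of_eq_add {k j : Fin (n + 1)} {J e : ℕ} (hJ : (j : ℕ) = J + 1)
    (h : (j : ℕ) = k + e) :
    matUAstar n qa a₁ a₂ b₁ b₂ t k j =
      (qa * a₁⁻¹ * a₂ * t ^ J) ^ e * qBinom t (J + 1) k *
        (qPoch (a₁ * b₁ * t ^ (n - (J + 1))) t e / qPoch (qa * a₂ * b₂ * t ^ (J + k)) t e) := by
  have h1 : ((j : ℕ) : ℤ) - 1 = (J : ℕ) := by omega
  have h2 : ((j : ℕ) : ℤ) + ((k : ℕ) : ℤ) - 1 = (J + k : ℕ) := by push_cast; omega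
  simp only [matUAstar, Matrix.of_apply, h1, h2, zpow_natCast, h ▸ Nat.le_add_right k e, if_true]
  rw [hJ, show J + 1 - k = e by omega]

end Entries

section Product

variable {n : ℕ} {qa a₁ a₂ b₁ b₂ t : ℂ}

lemma matUA_mul_matUAstar_apply_self (hq : ∀ m, qPoch t t m ≠ 0) (i : Fin (n + 1)) :
    (matUA n qa a₁ a₂ b₁ b₂ t * matUAstar n qa a₁ a₂ b₁ b₂ t) i i = 1 := by
  rw [matUA_isUpperTriangular.mul_apply_eq_sum_Ico matUAstar_isUpperTriangular i i (fun _ => 1),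
    Nat.Ico_succ_singleton, sum_singleton]
  intro k hik hki
  obtain rfl := le_antisymm hki hik
  simp [matUA, matUAstar, qBinom_self hq]

lemma matUA_mul_matUAstar_apply_of_lt (hq : ∀ m, qPoch t t m ≠ 0) (ht : t ≠ 0)
    (hden : ∀ i j : ℕ, i ≤ j → j ≤ n →
      qPoch (qa * a₂ * b₂ * t ^ (2 * i)) t (j - i) ≠ 0 ∧
      qPoch (qa * a₂ * b₂ * t ^ ((j : ℤ) + i - 1)) t (j - i) ≠ 0)
    {i j : Fin (n + 1)} (hij : i < j) :
    (matUA n qa a₁ a₂ b₁ b₂ t * matUAstar n qa a₁ a₂ b₁ b₂ t) i j = 0 := by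
  obtain ⟨D, hD⟩ : ∃ D, (j : ℕ) = i + D + 1 := ⟨j - i - 1, by omega⟩
  have hy : qPoch (qa * a₂ * b₂ * t ^ (2 * (i : ℕ))) t (2 * D + 1) ≠ 0 := by
    obtain ⟨h₁, h₂⟩ := hden i j hij.le (Nat.lt_succ_iff.1 j.2)
    rw [hD, show i + D + 1 - i = D + 1 by omega] at h₁ h₂
    rw [show ((i + D + 1 : ℕ) : ℤ) + i - 1 = (2 * i + D : ℕ) by push_cast; ring, zpow_natCast,
      pow_add, ← mul_assoc] at h₂
    rw [show 2 * D + 1 = D + (D + 1) by ring, qPoch_add]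
    exact mul_ne_zero (qPoch_ne_zero_of_le D.le_succ h₁) h₂
  have hc : (t ^ D)⁻¹ * t ^ D = 1 := inv_mul_cancel₀ (pow_ne_zero D ht)
  rw [matUA_isUpperTriangular.mul_apply_eq_sum_Ico matUAstar_isUpperTriangular i j
      (fun k => (qa * a₁⁻¹ * a₂) ^ (D + 1) * t ^ ((i + D) * (D + 1)) * qBinom t (i + D + 1) i *
          qPoch (a₁ * b₁ * t ^ (n - j)) t (D + 1) /
          qPoch (qa * a₂ * b₂ * t ^ (2 * (i : ℕ))) t (2 * D + 1) *
        (qBinom t (D + 1) (k - i) * (-1) ^ (k - i) * t ^ (k - i).choose 2 *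
          (t ^ D)⁻¹ ^ (k - i) * qPoch (qa * a₂ * b₂ * t ^ (2 * (i : ℕ)) * t ^ (k - i)) t D)),
    ← mul_sum, sum_Ico_eq_sum_range, show (j : ℕ) + 1 - i = D + 2 by omega]
  · simp only [Nat.add_sub_cancel_left]
    rw [sum_qBinom_mul_qPoch_eq_zero hq hc, mul_zero]
  intro k hik hkj
  obtain ⟨s, hs⟩ := Nat.exists_eq_add_of_le (Fin.le_def.1 hik)
  obtain ⟨e, he⟩ := Nat.exists_eq_add_of_le (Fin.le_def.1 hkj)
  have hz : a₁ * b₁ * t ^ (n - (i + s)) = a₁ * b₁ * t ^ (n - j) * t ^ e := by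
    rw [mul_assoc _ (t ^ _), ← pow_add]
    congr 3
    omega
  have hy' : qa * a₂ * b₂ * t ^ (i + D + (i + s)) =
      qa * a₂ * b₂ * t ^ (2 * (i : ℕ)) * t ^ (D + s) := by
    rw [mul_assoc _ (t ^ _), ← pow_add, show i + D + (i + s) = 2 * (i : ℕ) + (D + s) by ring]
  rw [matUA_apply_of_eq_add hs, matUAstar_apply_of_eq_add (J := i + D) (by omega) he, hs,
    Nat.add_sub_cancel_left, hz, hy', hD]
  exact product_summand_eq hq (by omega) hc hy

end Product

/-- `qa` stands for `q^α`. -/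
theorem UA_mul_UAstar_general (n : ℕ) (qa a₁ a₂ b₁ b₂ t : ℂ)
    (ht : t ≠ 0)
    (hroot : ∀ m : ℤ, m ≠ 0 → t ^ m ≠ 1)
    (hden : ∀ i j : ℕ, i ≤ j → j ≤ n →
      qPoch (qa * a₂ * b₂ * t ^ (2 * i)) t (j - i) ≠ 0 ∧
      qPoch (qa * a₂ * b₂ * t ^ ((j : ℤ) + i - 1)) t (j - i) ≠ 0) :
    matUA n qa a₁ a₂ b₁ b₂ t * matUAstar n qa a₁ a₂ b₁ b₂ t = 1 := by
  have hq := qPoch_self_ne_zero hroot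
  ext i j
  rcases lt_trichotomy i j with hij | rfl | hij
  · rw [Matrix.one_apply_ne hij.ne, matUA_mul_matUAstar_apply_of_lt hq ht hden hij]
  · rw [Matrix.one_apply_eq, matUA_mul_matUAstar_apply_self hq]
  · rw [Matrix.one_apply_ne hij.ne',
      matUA_isUpperTriangular.mul matUAstar_isUpperTriangular hij]

/-- Proposition 4.4: U_A · U_A* = I. Here qa plays the role of q^α. -/
theorem UA_mul_UAstar (n : ℕ) (qa a₁ a₂ b₁ b₂ t : ℂ)
    (hqa : qa ≠ 0) (ha₁ : a₁ ≠ 0) (ha₂ : a₂ ≠ 0) (hb₁ : b₁ ≠ 0) (hb₂ : b₂ ≠ 0) (ht : t ≠ 0)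
    (hroot : ∀ m : ℤ, m ≠ 0 → t ^ m ≠ 1)
    (hden : ∀ i j : ℕ, i ≤ j → j ≤ n →
      qPoch (qa * a₂ * b₂ * t ^ (2 * i)) t (j - i) ≠ 0 ∧
      qPoch (qa * a₂ * b₂ * t ^ ((j : ℤ) + i - 1)) t (j - i) ≠ 0) :
    matUA n qa a₁ a₂ b₁ b₂ t * matUAstar n qa a₁ a₂ b₁ b₂ t = 1 :=
  UA_mul_UAstar_general n qa a₁ a₂ b₁ b₂ t ht hroot hden
end
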